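/- Let G be a finite abelian group and let k, s, r be integers with 1 ≤ k ≤ s ≤ r. Consider the joint planted sampling on G^r: draw X' uniformly from G^r, draw an independent uniformly random k-element subset S ⊆ {1,…,r}, let i be the smallest element of S, and let X be X' with X_i replaced by −Σ_{j∈S, j≠i} X'_j. Independently, let π : {1,…,s} → {1,…,r} be a uniformly random injection. Then: (a) Pr[S ⊆ range(π)] = Π_{i=0}^{k−1} (s − i)/(r − i); and (b) conditioned on the event S ⊆ range(π), the array (X_{π(1)}, …, X_{π(s)}) ∈ G^s is distributed according to the planted distribution D1 on G^s (with the same k). -/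

import Mathlib

open Finset

/-- Number of k-SUM solutions of an instance `X ∈ G^r`: the number of `k`-element
subsets `S ⊆ {1,…,r}` with `∑_{i∈S} X i = 0`. -/
def numSol {G : Type} [AddCommGroup G] [DecidableEq G] (k : ℕ) {r : ℕ} (X : Fin r → G) : ℕ :=
  (((univ : Finset (Fin r)).powersetCard k).filter (fun S => ∑ i ∈ S, X i = 0)).card

/-- Plant a solution at `S`: replace the entry at the smallest index `i` of `S` by
`-∑_{j∈S, j≠i} Y j`. -/
def plant {G : Type} [AddCommGroup G] {r : ℕ} (Y : Fin r → G) (S : Finset (Fin r)) :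
    Fin r → G :=
  fun j =>
    if hS : S.Nonempty then
      if j = S.min' hS then -∑ i ∈ S.erase (S.min' hS), Y i else Y j
    else Y j

/-- The probability mass function of the planted distribution `D1` on `G^r`:
draw `Y` uniformly from `G^r` and an independent uniformly random `k`-element
subset `S`, and output `plant Y S`. -/
noncomputable def D1pmf {G : Type} [AddCommGroup G] [Fintype G] [DecidableEq G] (k : ℕ)
    {r : ℕ} (X : Fin r → G) : ℝ :=
  (((univ : Finset ((Fin r → G) × Finset (Fin r))).filter
      (fun p => p.2.card = k ∧ plant p.1 p.2 = X)).card : ℝ)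
    / ((Fintype.card G : ℝ) ^ r * (r.choose k : ℝ))

/-- The probability, over a uniformly random `k`-element subset `S ⊆ {1,…,r}` and an
independent uniformly random injection `π : {1,…,s} → {1,…,r}`, that `S ⊆ range π`. -/
noncomputable def coverProb (k s r : ℕ) : ℝ :=
  ((Finset.filter (fun p : Finset (Fin r) × (Fin s ↪ Fin r) =>
      p.1.card = k ∧ p.1 ⊆ (univ : Finset (Fin s)).map p.2) univ).card : ℝ)
    / ((Finset.filter (fun p : Finset (Fin r) × (Fin s ↪ Fin r) =>
      p.1.card = k) univ).card : ℝ)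

/-- The conditional pmf of the pulled-back array `(X_{π(1)}, …, X_{π(s)})`, where
`X = plant X' S` with `X'` uniform on `G^r`, `S` a uniformly random `k`-element
subset, `π` an independent uniformly random injection, conditioned on `S ⊆ range π`. -/
noncomputable def condPulledPmf (G : Type) [AddCommGroup G] [Fintype G] [DecidableEq G]
    (k s r : ℕ) (Z : Fin s → G) : ℝ :=
  ((Finset.filter (fun q : (Fin r → G) × Finset (Fin r) × (Fin s ↪ Fin r) =>
      q.2.1.card = k ∧ q.2.1 ⊆ (univ : Finset (Fin s)).map q.2.2
        ∧ (fun j => plant q.1 q.2.1 (q.2.2 j)) = Z) univ).card : ℝ)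
    / ((Finset.filter (fun q : (Fin r → G) × Finset (Fin r) × (Fin s ↪ Fin r) =>
      q.2.1.card = k ∧ q.2.1 ⊆ (univ : Finset (Fin s)).map q.2.2) univ).card : ℝ)

/-!
Planting at `S` overwrites only the entry at `min S`, and `W = plant Y S` holds exactly when
`∑_{j∈S} W j = 0` and `Y` agrees with `W` off `min S`. So every array summing to zero on `S` has
exactly `|G|` preimages, whichever index of `S` is the overwritten one; this is what makes the
argument work, since an injection `π` need not map `min T` to `min (π T)`. Hence, for `S = π T`,
the number of `X'` whose pulled-back planted array is `Z` is `|G|^(r-s)` (the coordinates outside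
`range π`) times the number of `Y ∈ G^s` with `plant Y T = Z`, and `T ↦ π T` is a bijection from
the `k`-subsets of `{1,…,s}` onto those of `range π`. Summing over `π` and `T` gives (b); counting
only the pairs `(S, π)` gives (a) as `C(s,k)/C(r,k)`.
-/

theorem Nat.cast_descFactorial_eq_prod_range_sub {K : Type*} [CommRing K] {n k : ℕ} (h : k ≤ n) :
    (n.descFactorial k : K) = ∏ i ∈ range k, ((n : K) - i) := by
  rw [Nat.descFactorial_eq_prod_range, Nat.cast_prod]
  exact prod_congr rfl fun i hi => Nat.cast_sub ((mem_range.mp hi).le.trans h)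

theorem prod_range_sub_div_sub_eq_choose_div {K : Type*} [Field K] [CharZero K] {k s r : ℕ}
    (hks : k ≤ s) (hkr : k ≤ r) :
    ∏ i ∈ range k, ((s : K) - i) / ((r : K) - i) = s.choose k / r.choose k := by
  rw [prod_div_distrib, ← Nat.cast_descFactorial_eq_prod_range_sub hks,
    ← Nat.cast_descFactorial_eq_prod_range_sub hkr, Nat.descFactorial_eq_factorial_mul_choose,
    Nat.descFactorial_eq_factorial_mul_choose, Nat.cast_mul, Nat.cast_mul,
    mul_div_mul_left _ _ (Nat.cast_ne_zero.mpr k.factorial_ne_zero)]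

section ProductCounting

variable {α β : Type*} [Fintype α] [Fintype β]

theorem card_filter_univ_prod (p : α → β → Prop) [∀ a b, Decidable (p a b)] :
    #{x : α × β | p x.1 x.2} = ∑ b, #{a | p a b} := by
  simp only [card_filter, Fintype.sum_prod_type_right]

theorem card_filter_univ_prod_and (c : β → Prop) (q : α → β → Prop) [DecidablePred c]
    [∀ a b, Decidable (q a b)] :
    #{x : α × β | c x.2 ∧ q x.1 x.2} = ∑ b with c b, #{a | q a b} := by
  rw [card_filter_univ_prod (fun a b => c b ∧ q a b), sum_filter]
  refine sum_congr rfl fun b _ => ?_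
  split_ifs with hb <;> simp [hb]

theorem card_filter_univ_prod_left (c : α → Prop) [DecidablePred c] :
    #{x : α × β | c x.1} = #{a | c a} * Fintype.card β := by
  rw [← univ_product_univ, filter_product_left, card_product, card_univ]

theorem card_filter_univ_prod_right (c : β → Prop) [DecidablePred c] :
    #{x : α × β | c x.2} = Fintype.card α * #{b | c b} := by
  rw [← univ_product_univ, filter_product_right, card_product, card_univ]

variable [DecidableEq β]

theorem sum_filter_card_eq_subset_map {M : Type*} [AddCommMonoid M] (π : α ↪ β) (k : ℕ)
    (f : Finset β → M) :
    ∑ S with #S = k ∧ S ⊆ univ.map π, f S = ∑ T : Finset α with #T = k, f (T.map π) := by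
  have : ({S | #S = k ∧ S ⊆ univ.map π} : Finset (Finset β)) = (univ.map π).powersetCard k := by
    ext S
    simp [mem_powersetCard, and_comm]
  rw [this, powersetCard_map, sum_map, univ_filter_card_eq]
  rfl

theorem card_filter_card_eq_subset_map (k : ℕ) :
    #{p : Finset β × (α ↪ β) | #p.1 = k ∧ p.1 ⊆ univ.map p.2}
      = Fintype.card (α ↪ β) * (Fintype.card α).choose k := by
  rw [card_filter_univ_prod (fun (S : Finset β) (π : α ↪ β) => #S = k ∧ S ⊆ univ.map π)]
  simp_rw [card_eq_sum_ones (filter _ _), sum_filter_card_eq_subset_map, sum_const,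
    univ_filter_card_eq, card_powersetCard, card_univ, smul_eq_mul, mul_one]

end ProductCounting

theorem card_filter_comp_embedding_eq {α β M : Type*} [Fintype α] [Fintype β] [DecidableEq β]
    [Fintype M] [DecidableEq M] [Nonempty M] (π : α ↪ β) (Z : α → M) :
    #{W : β → M | W ∘ π = Z} = Fintype.card M ^ (Fintype.card β - Fintype.card α) := by
  obtain ⟨m⟩ := ‹Nonempty M›
  have hpi : ({W : β → M | W ∘ π = Z} : Finset _) = Fintype.piFinset fun b =>
      if b ∈ univ.map π then {Function.extend π Z (fun _ => m) b} else univ := by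
    ext W
    simp only [mem_filter, mem_univ, true_and, Fintype.mem_piFinset, funext_iff,
      Function.comp_apply, mem_map]
    constructor
    · intro h b
      split_ifs with hb
      · obtain ⟨a, -, rfl⟩ := hb
        simp [π.injective.extend_apply, h]
      · exact mem_univ _
    · intro h a
      simpa [π.injective.extend_apply] using h (π a)
  rw [hpi, Fintype.card_piFinset]
  simp only [apply_ite card, card_singleton, card_univ]
  rw [prod_ite, prod_const_one, one_mul, prod_const, filter_not, filter_mem_eq_inter, univ_inter,
    card_sdiff_of_subset (subset_univ _), card_map, card_univ, card_univ]

section Plant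

variable {G : Type} [AddCommGroup G] {r : ℕ} {S : Finset (Fin r)}

theorem plant_apply_of_ne (Y : Fin r → G) (hS : S.Nonempty) {j : Fin r} (hj : j ≠ S.min' hS) :
    plant Y S j = Y j := by
  simp [plant, hS, hj]

theorem plant_apply_min' (Y : Fin r → G) (hS : S.Nonempty) :
    plant Y S (S.min' hS) = -∑ i ∈ S.erase (S.min' hS), Y i := by
  simp [plant, hS]

theorem sum_plant (Y : Fin r → G) (hS : S.Nonempty) : ∑ j ∈ S, plant Y S j = 0 := by
  rw [← add_sum_erase S _ (S.min'_mem hS), plant_apply_min',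
    sum_congr rfl fun j hj => plant_apply_of_ne Y hS (ne_of_mem_erase hj), neg_add_cancel]

theorem plant_eq_iff (hS : S.Nonempty) {Y W : Fin r → G} :
    plant Y S = W ↔ ∑ j ∈ S, W j = 0 ∧ ∀ j ≠ S.min' hS, Y j = W j := by
  constructor
  · rintro rfl
    exact ⟨sum_plant Y hS, fun j hj => (plant_apply_of_ne Y hS hj).symm⟩
  · rintro ⟨hW, hYW⟩
    have hoff : ∀ j ≠ S.min' hS, plant Y S j = W j := fun j hj =>
      (plant_apply_of_ne Y hS hj).trans (hYW j hj)
    -- both sides sum to zero over `S` and agree off the minimum, so they agree there too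
    have hsum := (sum_plant Y hS).trans hW.symm
    rw [← add_sum_erase S _ (S.min'_mem hS), ← add_sum_erase S W (S.min'_mem hS),
      sum_congr rfl fun j hj => hoff j (ne_of_mem_erase hj), add_left_inj] at hsum
    funext j
    by_cases hj : j = S.min' hS
    · rw [hj, hsum]
    · exact hoff j hj

theorem card_plant_eq [Fintype G] [DecidableEq G] (hS : S.Nonempty) (W : Fin r → G) :
    #{Y | plant Y S = W} = if ∑ j ∈ S, W j = 0 then Fintype.card G else 0 := by
  split_ifs with hW
  · have : ({Y | plant Y S = W} : Finset (Fin r → G))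
        = univ.image (Function.update W (S.min' hS)) := by
      ext Y
      simp only [mem_filter, mem_univ, true_and, mem_image, plant_eq_iff hS, hW,
        Function.update_eq_iff]
      exact ⟨fun h => ⟨Y _, rfl, fun j hj => (h j hj).symm⟩, fun ⟨_, _, h⟩ j hj => (h j hj).symm⟩
    rw [this, card_image_of_injective _ (Function.update_injective W _), card_univ]
  · simp [plant_eq_iff hS, hW]

end Plant

section PlantCounting

variable {G : Type} [AddCommGroup G] [Fintype G] [DecidableEq G]

theorem card_plant_map_comp_eq {s r : ℕ} (π : Fin s ↪ Fin r) {T : Finset (Fin s)}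
    (hT : T.Nonempty) (Z : Fin s → G) :
    #{X | (fun j => plant X (T.map π) (π j)) = Z}
      = Fintype.card G ^ (r - s) * #{Y | plant Y T = Z} := by
  calc #{X | (fun j => plant X (T.map π) (π j)) = Z}
      = ∑ W ∈ {W : Fin r → G | W ∘ π = Z}, #{X | plant X (T.map π) = W} := by
        rw [card_eq_sum_card_fiberwise (f := fun X => plant X (T.map π))
          (t := {W | W ∘ π = Z}) fun X hX => by simpa [Function.comp_def] using hX]
        refine sum_congr rfl fun W hW => congrArg card ?_
        ext X
        simp only [mem_filter, mem_univ, true_and] at hW ⊢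
        exact ⟨And.right, fun h => ⟨by subst h; simpa [Function.comp_def] using hW, h⟩⟩
    _ = ∑ W ∈ {W : Fin r → G | W ∘ π = Z}, #{Y | plant Y T = Z} := by
        refine sum_congr rfl fun W hW => ?_
        rw [card_plant_eq hT.map, card_plant_eq hT, sum_map, ← (mem_filter.mp hW).2]
        rfl
    _ = Fintype.card G ^ (r - s) * #{Y | plant Y T = Z} := by
        rw [sum_const, card_filter_comp_embedding_eq, Fintype.card_fin, Fintype.card_fin,
          smul_eq_mul]

theorem card_pulled_plant_eq {k s r : ℕ} (hk : 1 ≤ k) (Z : Fin s → G) :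
    #{q : (Fin r → G) × Finset (Fin r) × (Fin s ↪ Fin r) |
        #q.2.1 = k ∧ q.2.1 ⊆ univ.map q.2.2 ∧ (fun j => plant q.1 q.2.1 (q.2.2 j)) = Z}
      = Fintype.card (Fin s ↪ Fin r)
          * (Fintype.card G ^ (r - s)
            * #{p : (Fin s → G) × Finset (Fin s) | #p.2 = k ∧ plant p.1 p.2 = Z}) := by
  have hsplit := card_filter_univ_prod_and (α := Fin r → G)
    (fun p : Finset (Fin r) × (Fin s ↪ Fin r) => #p.1 = k ∧ p.1 ⊆ univ.map p.2)
    (fun X p => (fun j => plant X p.1 (p.2 j)) = Z)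
  simp only [and_assoc] at hsplit
  rw [hsplit, card_filter_univ_prod_and (fun T => #T = k) (fun Y T => plant Y T = Z), sum_filter,
    Fintype.sum_prod_type_right]
  simp_rw [← sum_filter, sum_filter_card_eq_subset_map]
  rw [sum_congr rfl fun π _ => sum_congr rfl fun T hT =>
      card_plant_map_comp_eq π (card_pos.mp ((mem_filter.mp hT).2.symm ▸ hk)) Z]
  simp_rw [← mul_sum, sum_const, card_univ, smul_eq_mul]
  exact mul_left_comm _ _ _

end PlantCounting

/-- **Subsampling a planted instance.**
(a) `Pr[S ⊆ range(π)] = Π_{i=0}^{k−1} (s−i)/(r−i)`; and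
(b) conditioned on `S ⊆ range(π)`, the array `(X_{π(1)}, …, X_{π(s)}) ∈ G^s` is
distributed according to the planted distribution `D1` on `G^s` (with the same `k`). -/
theorem planted_subsampling
    (G : Type) [AddCommGroup G] [Fintype G] [DecidableEq G]
    (k s r : ℕ) (hk : 1 ≤ k) (hks : k ≤ s) (hsr : s ≤ r) :
    (coverProb k s r = ∏ i ∈ Finset.range k, ((s : ℝ) - (i : ℝ)) / ((r : ℝ) - (i : ℝ)))
    ∧ (∀ Z : Fin s → G, condPulledPmf G k s r Z = D1pmf k Z) := by
  have : Nonempty (Fin s ↪ Fin r) := Function.Embedding.nonempty_of_card_le (by simpa)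
  have hinj : (Fintype.card (Fin s ↪ Fin r) : ℝ) ≠ 0 := by positivity
  have hchoose : (s.choose k : ℝ) ≠ 0 := by exact_mod_cast (Nat.choose_pos hks).ne'
  have hG : (Fintype.card G : ℝ) ≠ 0 := by positivity
  refine ⟨?_, fun Z => ?_⟩
  · rw [coverProb, card_filter_card_eq_subset_map,
      card_filter_univ_prod_left (β := Fin s ↪ Fin r) (fun S : Finset (Fin r) => #S = k),
      univ_filter_card_eq, card_powersetCard, prod_range_sub_div_sub_eq_choose_div hks (hks.trans hsr)]
    simp only [card_univ, Fintype.card_fin, Nat.cast_mul]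
    field_simp
  · have hpow : (Fintype.card G : ℝ) ^ r = Fintype.card G ^ (r - s) * Fintype.card G ^ s := by
      rw [← pow_add, Nat.sub_add_cancel hsr]
    rw [condPulledPmf, D1pmf, card_pulled_plant_eq hk,
      card_filter_univ_prod_right (α := Fin r → G)
        (fun p : Finset (Fin r) × (Fin s ↪ Fin r) => #p.1 = k ∧ p.1 ⊆ univ.map p.2),
      card_filter_card_eq_subset_map]
    simp only [Fintype.card_fun, Fintype.card_fin, Nat.cast_mul, Nat.cast_pow, hpow]
    field_simp
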